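/- arXiv:2311.01595 — 2 statements merged into one kernel-verified Lean document; each statement's English description precedes it below -/
import Mathlib

section
/- Let γ : S² → Matrix (Fin 2) (Fin 2) ℝ be even. For i = 1,2 let h_rr⁽ⁱ⁾, π_rr⁽ⁱ⁾ : S² → ℝ and h⁽ⁱ⁾, π⁽ⁱ⁾ : S² → Matrix (Fin 2) (Fin 2) ℝ be measurable with all pairwise products integrable, and define λ⁽ⁱ⁾ := (1/2) h_rr⁽ⁱ⁾, k⁽ⁱ⁾ := (1/2) h⁽ⁱ⁾ + λ⁽ⁱ⁾ γ, p⁽ⁱ⁾ := 2( π_rr⁽ⁱ⁾ − Σ_{A,B} γ_{AB} π⁽ⁱ⁾^{AB} ). Assume λ⁽ⁱ⁾ and π⁽ⁱ⁾ are even while p⁽ⁱ⁾ and k⁽ⁱ⁾ are odd. Then ∫_{S²} [ h_rr⁽¹⁾ π_rr⁽²⁾ + Σ_{A,B} h⁽¹⁾_{AB} π⁽²⁾^{AB} − h_rr⁽²⁾ π_rr⁽¹⁾ − Σ_{A,B} h⁽²⁾_{AB} π⁽¹⁾^{AB} ] dμ = 0. In other words, the Henneaux–Troessaert parity conditions remove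 the logarithmically divergent term of the ADM symplectic structure. -/
/-!
Pointwise `h_rr π_rr + h_{AB} π^{AB} = λ p + 2 k_{AB} π^{AB}`, so under the parity conditions the
integrand of the divergent term is a sum of products of an even and an odd function, hence odd.
The antipodal map preserves the surface measure, so the integral of an odd function vanishes.
-/

open MeasureTheory Metric

/-- The surface measure on the unit sphere `S² ⊆ ℝ³`. -/
noncomputable def sphereMeasure : Measure (sphere (0 : EuclideanSpace ℝ (Fin 3)) 1) :=
  (volume : Measure (EuclideanSpace ℝ (Fin 3))).toSphere

open Pointwise in
theorem MeasureTheory.Measure.measurePreserving_neg_toSphere {E : Type*} [NormedAddCommGroup E]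
    [NormedSpace ℝ E] [MeasurableSpace E] [BorelSpace E] (μ : Measure E) [μ.IsNegInvariant] :
    MeasurePreserving (Neg.neg : sphere (0 : E) 1 → sphere (0 : E) 1) μ.toSphere μ.toSphere := by
  refine ⟨continuous_neg.measurable, Measure.ext fun s hs => ?_⟩
  have hcoe : ((↑) '' (Neg.neg ⁻¹' s) : Set E) = -((↑) '' s) :=
    Set.image_neg_of_apply_neg_eq_neg fun _ _ => coe_neg_sphere _
  rw [Measure.map_apply continuous_neg.measurable hs, μ.toSphere_apply' hs,
    μ.toSphere_apply' (continuous_neg.measurable hs), hcoe, Set.smul_neg, Measure.measure_neg]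

theorem MeasureTheory.integral_eq_zero_of_odd {α E : Type*} [MeasurableSpace α]
    [InvolutiveNeg α] [MeasurableNeg α] [NormedAddCommGroup E] [NormedSpace ℝ E]
    {μ : Measure α} (hμ : MeasurePreserving Neg.neg μ μ) {f : α → E} (hf : f.Odd) :
    ∫ x, f x ∂μ = 0 := by
  have h := hμ.integral_comp' (f := MeasurableEquiv.neg α) f
  simp only [MeasurableEquiv.neg_apply, hf.eq, integral_neg] at h
  have h2 : (2 : ℝ) • ∫ x, f x ∂μ = 0 := by
    rw [two_smul]
    nth_rewrite 1 [← h]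
    exact neg_add_cancel _
  exact (smul_eq_zero.mp h2).resolve_left two_ne_zero

theorem adm_pairing_eq_in_parity_variables {ι : Type*} [Fintype ι] {hrr πrr lam p : ℝ}
    {h π γ k : Matrix ι ι ℝ} (hlam : lam = 1 / 2 * hrr) (hk : k = (1 / 2 : ℝ) • h + lam • γ)
    (hp : p = 2 * (πrr - ∑ A, ∑ B, γ A B * π A B)) :
    hrr * πrr + ∑ A, ∑ B, h A B * π A B = lam * p + 2 * ∑ A, ∑ B, k A B * π A B := by
  subst hlam hk hp
  simp only [Matrix.add_apply, Matrix.smul_apply, smul_eq_mul, add_mul, mul_assoc,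
    Finset.sum_add_distrib, ← Finset.mul_sum]
  ring

theorem adm_log_divergence_vanishes_HT_general
    (γ : sphere (0 : EuclideanSpace ℝ (Fin 3)) 1 → Matrix (Fin 2) (Fin 2) ℝ)
    (hrr πrr : Fin 2 → sphere (0 : EuclideanSpace ℝ (Fin 3)) 1 → ℝ)
    (h π' : Fin 2 → sphere (0 : EuclideanSpace ℝ (Fin 3)) 1 → Matrix (Fin 2) (Fin 2) ℝ)
    (lam p : Fin 2 → sphere (0 : EuclideanSpace ℝ (Fin 3)) 1 → ℝ)
    (k : Fin 2 → sphere (0 : EuclideanSpace ℝ (Fin 3)) 1 → Matrix (Fin 2) (Fin 2) ℝ)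
    (hlam : ∀ i n, lam i n = (1 / 2 : ℝ) * hrr i n)
    (hk : ∀ i n, k i n = (1 / 2 : ℝ) • h i n + lam i n • γ n)
    (hp : ∀ i n, p i n = 2 * (πrr i n - ∑ A : Fin 2, ∑ B : Fin 2, γ n A B * π' i n A B))
    (hlam_even : ∀ i n, lam i (-n) = lam i n)
    (hπ_even : ∀ i n, π' i (-n) = π' i n)
    (hp_odd : ∀ i n, p i (-n) = - p i n)
    (hk_odd : ∀ i n, k i (-n) = - k i n) :
    ∫ n, (hrr 0 n * πrr 1 n + (∑ A : Fin 2, ∑ B : Fin 2, h 0 n A B * π' 1 n A B)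
      - hrr 1 n * πrr 0 n - (∑ A : Fin 2, ∑ B : Fin 2, h 1 n A B * π' 0 n A B))
      ∂sphereMeasure = 0 := by
  have hpair : ∀ i j n, hrr i n * πrr j n + ∑ A, ∑ B, h i n A B * π' j n A B
      = lam i n * p j n + 2 * ∑ A, ∑ B, k i n A B * π' j n A B := fun i j n =>
    adm_pairing_eq_in_parity_variables (hlam i n) (hk i n) (hp j n)
  simp_rw [sub_sub, hpair]
  refine integral_eq_zero_of_odd volume.measurePreserving_neg_toSphere fun n => ?_
  simp only [hlam_even, hp_odd, hk_odd, hπ_even, Matrix.neg_apply, neg_mul,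
    Finset.sum_neg_distrib]
  ring

/-- The Henneaux–Troessaert parity conditions (`λ⁽ⁱ⁾`, `π⁽ⁱ⁾` even; `p⁽ⁱ⁾`, `k⁽ⁱ⁾` odd,
where `λ⁽ⁱ⁾ := (1/2)h_rr⁽ⁱ⁾`, `k⁽ⁱ⁾ := (1/2)h⁽ⁱ⁾ + λ⁽ⁱ⁾γ`,
`p⁽ⁱ⁾ := 2(π_rr⁽ⁱ⁾ − Σ γ_{AB} π⁽ⁱ⁾^{AB})`) remove the logarithmically divergent term
of the ADM symplectic structure. -/
theorem adm_log_divergence_vanishes_HT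
    (γ : sphere (0 : EuclideanSpace ℝ (Fin 3)) 1 → Matrix (Fin 2) (Fin 2) ℝ)
    (hγeven : ∀ n, γ (-n) = γ n)
    (hrr πrr : Fin 2 → sphere (0 : EuclideanSpace ℝ (Fin 3)) 1 → ℝ)
    (h π' : Fin 2 → sphere (0 : EuclideanSpace ℝ (Fin 3)) 1 → Matrix (Fin 2) (Fin 2) ℝ)
    (lam p : Fin 2 → sphere (0 : EuclideanSpace ℝ (Fin 3)) 1 → ℝ)
    (k : Fin 2 → sphere (0 : EuclideanSpace ℝ (Fin 3)) 1 → Matrix (Fin 2) (Fin 2) ℝ)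
    (hmeas_hrr : ∀ i, Measurable (hrr i))
    (hmeas_πrr : ∀ i, Measurable (πrr i))
    (hmeas_h : ∀ i (A B : Fin 2), Measurable (fun n => h i n A B))
    (hmeas_π : ∀ i (A B : Fin 2), Measurable (fun n => π' i n A B))
    (hint_scal : ∀ i j : Fin 2, Integrable (fun n => hrr i n * πrr j n) sphereMeasure)
    (hint_ang : ∀ (i j : Fin 2) (A B : Fin 2),
      Integrable (fun n => h i n A B * π' j n A B) sphereMeasure)
    (hlam : ∀ i n, lam i n = (1 / 2 : ℝ) * hrr i n)
    (hk : ∀ i n, k i n = (1 / 2 : ℝ) • h i n + lam i n • γ n)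
    (hp : ∀ i n, p i n = 2 * (πrr i n - ∑ A : Fin 2, ∑ B : Fin 2, γ n A B * π' i n A B))
    (hlam_even : ∀ i n, lam i (-n) = lam i n)
    (hπ_even : ∀ i n, π' i (-n) = π' i n)
    (hp_odd : ∀ i n, p i (-n) = - p i n)
    (hk_odd : ∀ i n, k i (-n) = - k i n) :
    ∫ n, (hrr 0 n * πrr 1 n + (∑ A : Fin 2, ∑ B : Fin 2, h 0 n A B * π' 1 n A B)
      - hrr 1 n * πrr 0 n - (∑ A : Fin 2, ∑ B : Fin 2, h 1 n A B * π' 0 n A B))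
      ∂sphereMeasure = 0 :=
  adm_log_divergence_vanishes_HT_general γ hrr πrr h π' lam p k hlam hk hp hlam_even hπ_even hp_odd
    hk_odd
end

section
/- Let σ(θ,φ) := (π−θ, φ+π) and call a function u(θ,φ) even if u∘σ = u and odd if u∘σ = −u. For i = 1,2 let F⁽ⁱ⁾, G⁽ⁱ⁾ be families of real functions on (0,π) × ℝ indexed by pairs (a,b) with a,b ∈ {r,θ,φ}, continuously differentiable, 2π-periodic in φ, with the contraction Σ_{a,b} F⁽ⁱ⁾^a_b G⁽ʲ⁾^b_a integrable against sin θ dθ dφ for all i,j. Set T⁽ⁱ⁾ := F⁽ⁱ⁾^r_r − F⁽ⁱ⁾^θ_θ − F⁽ⁱ⁾^φ_φ. Assume for each i: (A1) F⁽ⁱ⁾^r_θ = −F⁽ⁱ⁾^θ_r and F⁽ⁱ⁾^r_φ = −sin²θ · F⁽ⁱ⁾^φ_r; (A2) F⁽ⁱ⁾^θ_φ = sin²θ · F⁽ⁱ⁾^φ_θ; (P1) F⁽ⁱ⁾^θ_r, F⁽ⁱ⁾^θ_φ, F⁽ⁱ⁾^φ_θ are even; (P2) F⁽ⁱ⁾^φ_r,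 F⁽ⁱ⁾^θ_θ, F⁽ⁱ⁾^φ_φ, G⁽ⁱ⁾^r_r are odd; (P3) T⁽ⁱ⁾, G⁽ⁱ⁾^θ_θ + G⁽ⁱ⁾^r_r, G⁽ⁱ⁾^φ_φ + G⁽ⁱ⁾^r_r are even; (P4) G⁽ⁱ⁾^θ_r + (2 sin θ)⁻¹ ∂_φ T⁽ⁱ⁾ is odd; (P5) G⁽ⁱ⁾^r_θ + (2 sin θ)⁻¹ ∂_φ T⁽ⁱ⁾ is odd; (P6) G⁽ⁱ⁾^φ_r − (2 sin θ)⁻¹ ∂_θ T⁽ⁱ⁾ is even; (P7) G⁽ⁱ⁾^r_φ − (sin θ / 2) ∂_θ T⁽ⁱ⁾ is even; (P8) G⁽ⁱ⁾^θ_φ + (sin θ / 2) T⁽ⁱ⁾ is odd; (P9) G⁽ⁱ⁾^φ_θ − (2 sin θ)⁻¹ T⁽ⁱ⁾ is odd. Then ∫₀^π ∫₀^{2π} Σ_{a,b} ( F⁽¹⁾^a_b G⁽²⁾^b_a − F⁽²⁾^a_b G⁽¹⁾^b_a ) sin θ dφ dθ = 0. -/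
/-- Index set `{r, θ, φ}` for the frame components on the asymptotic 2-sphere. -/
inductive SphIdx : Type
  | r : SphIdx
  | th : SphIdx
  | ph : SphIdx
  deriving DecidableEq

instance : Fintype SphIdx where
  elems := {SphIdx.r, SphIdx.th, SphIdx.ph}
  complete := by intro x; cases x <;> simp

/-- The antipodal map of the 2-sphere in spherical coordinates,
`σ(θ,φ) = (π − θ, φ + π)`. -/
noncomputable def antipode : ℝ × ℝ → ℝ × ℝ :=
  fun p => (Real.pi - p.1, p.2 + Real.pi)

/-- A function is even if `u ∘ σ = u`. -/
def IsEvenFn (u : ℝ × ℝ → ℝ) : Prop := ∀ p, u (antipode p) = u p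

/-- A function is odd if `u ∘ σ = − u`. -/
def IsOddFn (u : ℝ × ℝ → ℝ) : Prop := ∀ p, u (antipode p) = - u p

lemma SphIdx.sum_expand (f : SphIdx → ℝ) : ∑ a : SphIdx, f a = f .r + f .th + f .ph := by
  show f .r + (f .th + (f .ph + 0)) = _
  ring

section Key

variable (F G : Fin 2 → SphIdx → SphIdx → ℝ × ℝ → ℝ)
    (T : Fin 2 → ℝ × ℝ → ℝ)

lemma key_odd
    (hT : ∀ i p, T i p = F i .r .r p - F i .th .th p - F i .ph .ph p)
    (hA1 : ∀ i p, F i .r .th p = - F i .th .r p ∧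
      F i .r .ph p = - (Real.sin p.1) ^ 2 * F i .ph .r p)
    (hA2 : ∀ i p, F i .th .ph p = (Real.sin p.1) ^ 2 * F i .ph .th p)
    (hP1 : ∀ i, IsEvenFn (F i .th .r) ∧ IsEvenFn (F i .th .ph) ∧ IsEvenFn (F i .ph .th))
    (hP2 : ∀ i, IsOddFn (F i .ph .r) ∧ IsOddFn (F i .th .th) ∧ IsOddFn (F i .ph .ph) ∧
      IsOddFn (G i .r .r))
    (hP3 : ∀ i, IsEvenFn (T i) ∧ IsEvenFn (fun p => G i .th .th p + G i .r .r p) ∧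
      IsEvenFn (fun p => G i .ph .ph p + G i .r .r p))
    (hP4 : ∀ i, IsOddFn (fun p =>
      G i .th .r p + (2 * Real.sin p.1)⁻¹ * deriv (fun y => T i (p.1, y)) p.2))
    (hP5 : ∀ i, IsOddFn (fun p =>
      G i .r .th p + (2 * Real.sin p.1)⁻¹ * deriv (fun y => T i (p.1, y)) p.2))
    (hP6 : ∀ i, IsEvenFn (fun p =>
      G i .ph .r p - (2 * Real.sin p.1)⁻¹ * deriv (fun x => T i (x, p.2)) p.1))
    (hP7 : ∀ i, IsEvenFn (fun p =>
      G i .r .ph p - (Real.sin p.1 / 2) * deriv (fun x => T i (x, p.2)) p.1))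
    (hP8 : ∀ i, IsOddFn (fun p => G i .th .ph p + (Real.sin p.1 / 2) * T i p))
    (hP9 : ∀ i, IsOddFn (fun p => G i .ph .th p - (2 * Real.sin p.1)⁻¹ * T i p))
    (i j : Fin 2) (p : ℝ × ℝ) :
    (∑ a : SphIdx, ∑ b : SphIdx, F i a b (antipode p) * G j b a (antipode p))
      = - ∑ a : SphIdx, ∑ b : SphIdx, F i a b p * G j b a p := by
  -- notation
  set q : ℝ × ℝ := antipode p with hq
  have hq1 : q.1 = Real.pi - p.1 := rfl
  have hq2 : q.2 = p.2 + Real.pi := rfl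
  have sπ : Real.sin q.1 = Real.sin p.1 := by rw [hq1]; exact Real.sin_pi_sub p.1
  -- derivative parity
  have hDφ : deriv (fun y => T j (q.1, y)) q.2 = deriv (fun y => T j (p.1, y)) p.2 := by
    have h : (fun y => T j (p.1, y)) = (fun y => T j (q.1, y + Real.pi)) := by
      funext y
      exact ((hP3 j).1 (p.1, y)).symm
    rw [hq2, ← deriv_comp_add_const (fun y => T j (q.1, y)) Real.pi p.2, ← h]
  have hDθ : deriv (fun x => T j (x, q.2)) q.1 = - deriv (fun x => T j (x, p.2)) p.1 := by
    have h : (fun x => T j (x, p.2)) = (fun x => T j (Real.pi - x, q.2)) := by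
      funext x
      exact ((hP3 j).1 (x, p.2)).symm
    have h2 : deriv (fun x => T j (Real.pi - x, q.2)) p.1
        = - deriv (fun x => T j (x, q.2)) (Real.pi - p.1) := by
      simpa using deriv_comp_const_sub (fun x => T j (x, q.2)) Real.pi p.1
    rw [← h] at h2
    rw [hq1]
    linarith [h2]
  -- clean substitution equalities
  have eTq : T i q = T i p := (hP3 i).1 p
  have eTqj : T j q = T j p := (hP3 j).1 p
  have eFthr : F i .th .r q = F i .th .r p := (hP1 i).1 p
  have eFthph : F i .th .ph q = F i .th .ph p := (hP1 i).2.1 p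
  have eFphth : F i .ph .th q = F i .ph .th p := (hP1 i).2.2 p
  have eFphr : F i .ph .r q = - F i .ph .r p := (hP2 i).1 p
  have eFthth : F i .th .th q = - F i .th .th p := (hP2 i).2.1 p
  have eFphph : F i .ph .ph q = - F i .ph .ph p := (hP2 i).2.2.1 p
  have eGrr : G j .r .r q = - G j .r .r p := (hP2 j).2.2.2 p
  have eGthth : G j .th .th q = G j .th .th p + 2 * G j .r .r p := by
    have h := (hP3 j).2.1 p
    simp only at h
    linarith [h, eGrr]
  have eGphph : G j .ph .ph q = G j .ph .ph p + 2 * G j .r .r p := by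
    have h := (hP3 j).2.2 p
    simp only at h
    linarith [h, eGrr]
  have eGthr : G j .th .r q = - G j .th .r p
      - 2 * (2 * Real.sin p.1)⁻¹ * deriv (fun y => T j (p.1, y)) p.2 := by
    have h := (hP4 j) p
    simp only at h
    rw [sπ, hDφ] at h
    linarith [h]
  have eGrth : G j .r .th q = - G j .r .th p
      - 2 * (2 * Real.sin p.1)⁻¹ * deriv (fun y => T j (p.1, y)) p.2 := by
    have h := (hP5 j) p
    simp only at h
    rw [sπ, hDφ] at h
    linarith [h]
  have eGphr : G j .ph .r q = G j .ph .r p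
      - 2 * (2 * Real.sin p.1)⁻¹ * deriv (fun x => T j (x, p.2)) p.1 := by
    have h := (hP6 j) p
    simp only at h
    rw [sπ, hDθ] at h
    linarith [h]
  have eGrph : G j .r .ph q = G j .r .ph p
      - Real.sin p.1 * deriv (fun x => T j (x, p.2)) p.1 := by
    have h := (hP7 j) p
    simp only at h
    rw [sπ, hDθ] at h
    linarith [h]
  have eGthph : G j .th .ph q = - G j .th .ph p - Real.sin p.1 * T j p := by
    have h := (hP8 j) p
    simp only at h
    rw [sπ, eTqj] at h
    linarith [h]
  have eGphth : G j .ph .th q = - G j .ph .th p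
      + 2 * (2 * Real.sin p.1)⁻¹ * T j p := by
    have h := (hP9 j) p
    simp only at h
    rw [sπ, eTqj] at h
    linarith [h]
  have eFrr : ∀ x, F i .r .r x = T i x + F i .th .th x + F i .ph .ph x := by
    intro x; linarith [hT i x]
  have eFrth : ∀ x, F i .r .th x = - F i .th .r x := fun x => (hA1 i x).1
  have eFrph : ∀ x, F i .r .ph x = - (Real.sin x.1) ^ 2 * F i .ph .r x := fun x => (hA1 i x).2
  have eFthph' : ∀ x, F i .th .ph x = (Real.sin x.1) ^ 2 * F i .ph .th x := hA2 i
  have hkey : Real.sin p.1 ^ 2 * (2 * Real.sin p.1)⁻¹ = Real.sin p.1 / 2 := by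
    rcases eq_or_ne (Real.sin p.1) 0 with h | h
    · simp [h]
    · field_simp
  rw [SphIdx.sum_expand, SphIdx.sum_expand, SphIdx.sum_expand, SphIdx.sum_expand,
    SphIdx.sum_expand, SphIdx.sum_expand, SphIdx.sum_expand, SphIdx.sum_expand]
  rw [eFrr q, eFrr p, eFrth q, eFrth p, eFrph q, eFrph p, eFthph' q, eFthph' p,
    sπ, eTq, eFthr, eFphth, eFphr, eFthth, eFphph,
    eGrr, eGthth, eGphph, eGthr, eGrth, eGphr, eGrph, eGthph, eGphth]
  linear_combination (2 * (F i .ph .th p * T j p - F i .ph .r p * deriv (fun x => T j (x, p.2)) p.1)) * hkey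

end Key

lemma odd_periodic_integral (f : ℝ → ℝ → ℝ)
    (hodd : ∀ θ φ, f (Real.pi - θ) (φ + Real.pi) = - f θ φ)
    (hper : ∀ θ φ, f θ (φ + 2 * Real.pi) = f θ φ) :
    ∫ θ in (0:ℝ)..Real.pi, ∫ φ in (0:ℝ)..(2 * Real.pi), f θ φ = 0 := by
  have hg : ∀ θ, (∫ φ in (0:ℝ)..(2 * Real.pi), f (Real.pi - θ) φ)
      = - ∫ φ in (0:ℝ)..(2 * Real.pi), f θ φ := by
    intro θ
    have s1 : (∫ φ in (-Real.pi)..Real.pi, f (Real.pi - θ) (φ + Real.pi))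
        = ∫ φ in (0:ℝ)..(2 * Real.pi), f (Real.pi - θ) φ := by
      have h := intervalIntegral.integral_comp_add_right (a := -Real.pi) (b := Real.pi)
        (f := f (Real.pi - θ)) Real.pi
      rw [show -Real.pi + Real.pi = 0 by ring, show Real.pi + Real.pi = 2 * Real.pi by ring] at h
      exact h
    have s2 : (∫ φ in (-Real.pi)..Real.pi, f (Real.pi - θ) (φ + Real.pi))
        = ∫ φ in (-Real.pi)..Real.pi, - f θ φ := by
      apply intervalIntegral.integral_congr
      intro φ _
      exact hodd θ φ
    have s3 : (∫ φ in (-Real.pi)..Real.pi, f θ φ) = ∫ φ in (0:ℝ)..(2 * Real.pi), f θ φ := by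
      have hp : Function.Periodic (f θ) (2 * Real.pi) := fun x => hper θ x
      have h := hp.intervalIntegral_add_eq (-Real.pi) 0
      rw [show -Real.pi + 2 * Real.pi = Real.pi by ring, zero_add] at h
      exact h
    rw [← s1, s2, intervalIntegral.integral_neg, s3]
  have h1 := intervalIntegral.integral_comp_sub_left (a := (0:ℝ)) (b := Real.pi)
    (fun θ => ∫ φ in (0:ℝ)..(2 * Real.pi), f θ φ) Real.pi
  simp only [sub_zero, sub_self] at h1
  have h2 : (∫ θ in (0:ℝ)..Real.pi,
        (fun θ => ∫ φ in (0:ℝ)..(2 * Real.pi), f θ φ) (Real.pi - θ))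
      = - ∫ θ in (0:ℝ)..Real.pi, ∫ φ in (0:ℝ)..(2 * Real.pi), f θ φ := by
    have he : (fun θ => (fun θ => ∫ φ in (0:ℝ)..(2 * Real.pi), f θ φ) (Real.pi - θ))
        = fun θ => - ∫ φ in (0:ℝ)..(2 * Real.pi), f θ φ := by
      funext θ
      exact hg θ
    rw [he, intervalIntegral.integral_neg]
  have := h1.symm.trans h2
  linarith [this]

/-- Under the gauge conditions (A1)–(A2) and the new parity conditions (P1)–(P9) of the
paper, the coefficient of the leading logarithmic divergence of the Ashtekar–Barbero
symplectic structure, `∫₀^π ∫₀^{2π} Σ_{a,b} (F⁽¹⁾^a_b G⁽²⁾^b_a − F⁽²⁾^a_b G⁽¹⁾^b_a) sin θ dφ dθ`,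
vanishes. -/
theorem ashtekar_log_divergence_vanishes_new_parity
    (F G : Fin 2 → SphIdx → SphIdx → ℝ × ℝ → ℝ)
    (T : Fin 2 → ℝ × ℝ → ℝ)
    (hT : ∀ i p, T i p = F i .r .r p - F i .th .th p - F i .ph .ph p)
    (hFsmooth : ∀ i a b, ContDiffOn ℝ 1 (F i a b) (Set.Ioo 0 Real.pi ×ˢ (Set.univ : Set ℝ)))
    (hGsmooth : ∀ i a b, ContDiffOn ℝ 1 (G i a b) (Set.Ioo 0 Real.pi ×ˢ (Set.univ : Set ℝ)))
    (hFper : ∀ i a b θ φ, F i a b (θ, φ + 2 * Real.pi) = F i a b (θ, φ))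
    (hGper : ∀ i a b θ φ, G i a b (θ, φ + 2 * Real.pi) = G i a b (θ, φ))
    (hint : ∀ i j : Fin 2, MeasureTheory.IntegrableOn
      (fun p : ℝ × ℝ => (∑ a : SphIdx, ∑ b : SphIdx, F i a b p * G j b a p) * Real.sin p.1)
      (Set.Ioo 0 Real.pi ×ˢ Set.Ioo 0 (2 * Real.pi)) MeasureTheory.volume)
    (hA1 : ∀ i p, F i .r .th p = - F i .th .r p ∧
      F i .r .ph p = - (Real.sin p.1) ^ 2 * F i .ph .r p)
    (hA2 : ∀ i p, F i .th .ph p = (Real.sin p.1) ^ 2 * F i .ph .th p)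
    (hP1 : ∀ i, IsEvenFn (F i .th .r) ∧ IsEvenFn (F i .th .ph) ∧ IsEvenFn (F i .ph .th))
    (hP2 : ∀ i, IsOddFn (F i .ph .r) ∧ IsOddFn (F i .th .th) ∧ IsOddFn (F i .ph .ph) ∧
      IsOddFn (G i .r .r))
    (hP3 : ∀ i, IsEvenFn (T i) ∧ IsEvenFn (fun p => G i .th .th p + G i .r .r p) ∧
      IsEvenFn (fun p => G i .ph .ph p + G i .r .r p))
    (hP4 : ∀ i, IsOddFn (fun p =>
      G i .th .r p + (2 * Real.sin p.1)⁻¹ * deriv (fun y => T i (p.1, y)) p.2))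
    (hP5 : ∀ i, IsOddFn (fun p =>
      G i .r .th p + (2 * Real.sin p.1)⁻¹ * deriv (fun y => T i (p.1, y)) p.2))
    (hP6 : ∀ i, IsEvenFn (fun p =>
      G i .ph .r p - (2 * Real.sin p.1)⁻¹ * deriv (fun x => T i (x, p.2)) p.1))
    (hP7 : ∀ i, IsEvenFn (fun p =>
      G i .r .ph p - (Real.sin p.1 / 2) * deriv (fun x => T i (x, p.2)) p.1))
    (hP8 : ∀ i, IsOddFn (fun p => G i .th .ph p + (Real.sin p.1 / 2) * T i p))
    (hP9 : ∀ i, IsOddFn (fun p => G i .ph .th p - (2 * Real.sin p.1)⁻¹ * T i p)) :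
    ∫ θ in (0:ℝ)..Real.pi, ∫ φ in (0:ℝ)..(2 * Real.pi),
      (∑ a : SphIdx, ∑ b : SphIdx,
        (F 0 a b (θ, φ) * G 1 b a (θ, φ) - F 1 a b (θ, φ) * G 0 b a (θ, φ)))
        * Real.sin θ = 0 := by
  have hodd : ∀ p : ℝ × ℝ,
      (∑ a : SphIdx, ∑ b : SphIdx,
        (F 0 a b (antipode p) * G 1 b a (antipode p)
          - F 1 a b (antipode p) * G 0 b a (antipode p))) * Real.sin (antipode p).1
      = - ((∑ a : SphIdx, ∑ b : SphIdx,
        (F 0 a b p * G 1 b a p - F 1 a b p * G 0 b a p)) * Real.sin p.1) := by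
    intro p
    have hs : Real.sin (antipode p).1 = Real.sin p.1 := Real.sin_pi_sub p.1
    rw [hs]
    have h01 := key_odd F G T hT hA1 hA2 hP1 hP2 hP3 hP4 hP5 hP6 hP7 hP8 hP9 0 1 p
    have h10 := key_odd F G T hT hA1 hA2 hP1 hP2 hP3 hP4 hP5 hP6 hP7 hP8 hP9 1 0 p
    simp only [Finset.sum_sub_distrib]
    rw [h01, h10]
    ring
  exact odd_periodic_integral
    (fun θ φ => (∑ a : SphIdx, ∑ b : SphIdx,
        (F 0 a b (θ, φ) * G 1 b a (θ, φ) - F 1 a b (θ, φ) * G 0 b a (θ, φ)))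
        * Real.sin θ)
    (fun θ φ => hodd (θ, φ))
    (fun θ φ => by simp only [hFper, hGper])
end
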